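/- arXiv:1304.6255 — 10 statements merged into one kernel-verified Lean document; each statement's English description precedes it below -/
import Mathlib

section
/- A vertex set D is an efficient dominating set of a finite simple graph G if and only if D is a maximum weight independent set in the square G² (with vertex weights ω(v) = |N[v]|) whose total weight equals |V(G)|. -/
open SimpleGraph Finset

/-- `D` is an efficient dominating set: every vertex is in the closed
neighborhood of exactly one vertex of `D`. -/
def IsEffDomSet {V : Type*} (G : SimpleGraph V) (D : Set V) : Prop :=
  ∀ u : V, ∃! d : V, d ∈ D ∧ (d = u ∨ G.Adj d u)

/-- The square of a graph: distinct vertices at distance 1 or 2 are adjacent. -/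
def SimpleGraph.square {V : Type*} (G : SimpleGraph V) : SimpleGraph V where
  Adj u v := u ≠ v ∧ (G.Adj u v ∨ ∃ w, G.Adj u w ∧ G.Adj w v)
  symm := by
    constructor
    rintro u v ⟨h, h' | ⟨w, hw1, hw2⟩⟩
    · exact ⟨h.symm, Or.inl h'.symm⟩
    · exact ⟨h.symm, Or.inr ⟨w, hw2.symm, hw1.symm⟩⟩
  loopless := by constructor; rintro u ⟨h, -⟩; exact h rfl

/-- `S` is an independent set of `G`. -/
def IsIndepSet' {V : Type*} (G : SimpleGraph V) (S : Set V) : Prop :=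
  ∀ a ∈ S, ∀ b ∈ S, ¬ G.Adj a b

/-!
The closed neighbourhoods of two distinct vertices meet exactly when the vertices are adjacent
in `G²`, so a set is independent in `G²` iff its closed neighbourhoods are pairwise disjoint.
For such a set `I` the weight `∑ v ∈ I, |N[v]|` is the size of the union of these
neighbourhoods, hence at most `|V|`, with equality iff they cover `V`; and disjoint closed
neighbourhoods covering `V` is precisely efficient domination.
-/

namespace SimpleGraph

variable {V : Type*} (G : SimpleGraph V)

theorem square_adj_iff_exists_common {a b : V} :
    G.square.Adj a b ↔ a ≠ b ∧ ∃ u, (a = u ∨ G.Adj a u) ∧ (b = u ∨ G.Adj b u) := by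
  refine ⟨fun ⟨hab, h⟩ => ⟨hab, ?_⟩, fun ⟨hab, u, ha, hb⟩ => ⟨hab, ?_⟩⟩
  · rcases h with h | ⟨w, haw, hwb⟩
    · exact ⟨b, Or.inr h, Or.inl rfl⟩
    · exact ⟨w, Or.inr haw, Or.inr hwb.symm⟩
  · rcases ha with rfl | ha <;> rcases hb with rfl | hb
    · exact absurd rfl hab
    · exact Or.inl hb.symm
    · exact Or.inl ha
    · exact Or.inr ⟨u, ha, hb.symm⟩

theorem isEffDomSet_iff {D : Set V} :
    IsEffDomSet G D ↔ IsIndepSet' G.square D ∧ ∀ u, ∃ d ∈ D, d = u ∨ G.Adj d u := by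
  refine ⟨fun h => ⟨?_, fun u => ?_⟩, fun ⟨hD, hcover⟩ u => ?_⟩
  · intro a ha b hb hab
    obtain ⟨hne, u, hau, hbu⟩ := G.square_adj_iff_exists_common.1 hab
    obtain ⟨d, -, hd⟩ := h u
    exact hne ((hd a ⟨ha, hau⟩).trans (hd b ⟨hb, hbu⟩).symm)
  · obtain ⟨d, hd, -⟩ := h u
    exact ⟨d, hd⟩
  · obtain ⟨d, hdD, hdu⟩ := hcover u
    refine ⟨d, ⟨hdD, hdu⟩, fun d' ⟨hd'D, hd'u⟩ => ?_⟩
    by_contra hne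
    exact hD d' hd'D d hdD (G.square_adj_iff_exists_common.2 ⟨hne, u, hd'u, hdu⟩)

variable [DecidableEq V]

def closedNeighborFinset (v : V) [Fintype (G.neighborSet v)] : Finset V :=
  insert v (G.neighborFinset v)

section closedNeighborFinset

variable {G} {u v : V} [Fintype (G.neighborSet v)]

theorem mem_closedNeighborFinset : u ∈ G.closedNeighborFinset v ↔ v = u ∨ G.Adj v u := by
  simp [closedNeighborFinset, eq_comm]

theorem card_closedNeighborFinset : #(G.closedNeighborFinset v) = G.degree v + 1 :=
  card_insert_of_notMem (G.notMem_neighborFinset_self v)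

end closedNeighborFinset

variable [G.LocallyFinite]

theorem isIndepSet'_square_iff_pairwiseDisjoint {S : Set V} :
    IsIndepSet' G.square S ↔ S.PairwiseDisjoint (G.closedNeighborFinset ·) := by
  refine ⟨fun h a ha b hb hne => Finset.disjoint_left.2 fun u hau hbu => h a ha b hb ?_,
    fun h a ha b hb hab => ?_⟩
  · exact G.square_adj_iff_exists_common.2
      ⟨hne, u, mem_closedNeighborFinset.1 hau, mem_closedNeighborFinset.1 hbu⟩
  · obtain ⟨hne, u, hau, hbu⟩ := G.square_adj_iff_exists_common.1 hab
    exact Finset.disjoint_left.1 (h ha hb hne) (mem_closedNeighborFinset.2 hau)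
      (mem_closedNeighborFinset.2 hbu)

theorem sum_degree_add_one_eq_card_biUnion {I : Finset V}
    (hI : (I : Set V).PairwiseDisjoint (G.closedNeighborFinset ·)) :
    ∑ v ∈ I, (G.degree v + 1) = #(I.biUnion (G.closedNeighborFinset ·)) := by
  simp only [card_biUnion hI, card_closedNeighborFinset]

end SimpleGraph

theorem stmt0_general {V : Type*} [Fintype V] (G : SimpleGraph V)
    [DecidableRel G.Adj] (D : Finset V) :
    IsEffDomSet G (D : Set V) ↔
      (IsIndepSet' G.square (D : Set V) ∧
       (∀ I : Finset V, IsIndepSet' G.square (I : Set V) →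
         ∑ v ∈ I, (G.degree v + 1) ≤ ∑ v ∈ D, (G.degree v + 1)) ∧
       ∑ v ∈ D, (G.degree v + 1) = Fintype.card V) := by
  classical
  have weight_eq {I : Finset V} (hI : IsIndepSet' G.square (I : Set V)) :=
    G.sum_degree_add_one_eq_card_biUnion (G.isIndepSet'_square_iff_pairwiseDisjoint.1 hI)
  have covers_iff : (∀ u, ∃ d ∈ (D : Set V), d = u ∨ G.Adj d u) ↔
      D.biUnion (G.closedNeighborFinset ·) = univ := by
    simp [eq_univ_iff_forall, mem_closedNeighborFinset]
  rw [G.isEffDomSet_iff, covers_iff, ← card_eq_iff_eq_univ]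
  constructor
  · rintro ⟨hD, hcover⟩
    rw [← weight_eq hD] at hcover
    refine ⟨hD, fun I hI => ?_, hcover⟩
    rw [hcover, weight_eq hI]
    exact card_le_univ _
  · rintro ⟨hD, -, hweight⟩
    exact ⟨hD, weight_eq hD ▸ hweight⟩

theorem stmt0 {V : Type*} [Fintype V] [DecidableEq V] (G : SimpleGraph V)
    [DecidableRel G.Adj] (D : Finset V) :
    IsEffDomSet G (D : Set V) ↔
      (IsIndepSet' G.square (D : Set V) ∧
       (∀ I : Finset V, IsIndepSet' G.square (I : Set V) →
         ∑ v ∈ I, (G.degree v + 1) ≤ ∑ v ∈ D, (G.degree v + 1)) ∧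
       ∑ v ∈ D, (G.degree v + 1) = Fintype.card V) :=
  stmt0_general G D
end

section
/- A vertex set D is an efficient dominating set of a finite simple graph G if and only if D is a dominating set of G with Σ_{d∈D} |N[d]| = |V(G)| that has minimum total weight among all dominating sets of G with respect to the weight function ω(v) = |N[v]|. -/
/-! Every vertex `u` is counted in `Σ_{d ∈ D} |N[d]|` once for each `d ∈ D` with `u ∈ N[d]`.
So the weight of any dominating set is at least `|V|`, with equality exactly when every vertex
is dominated once, i.e. when the set is efficient. -/

open SimpleGraph Finset

/-- `D` is a dominating set: every vertex is in the closed neighborhood of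
some vertex of `D`. -/
def IsDomSet {V : Type*} (G : SimpleGraph V) (D : Set V) : Prop :=
  ∀ u : V, ∃ d ∈ D, d = u ∨ G.Adj d u

namespace SimpleGraph

variable {V : Type*} [DecidableEq V] (G : SimpleGraph V) [DecidableRel G.Adj]

def dominatorsIn (D : Finset V) (u : V) : Finset V := {d ∈ D | d = u ∨ G.Adj d u}

variable {G}

theorem isDomSet_iff_forall_one_le_card_dominatorsIn {D : Finset V} :
    IsDomSet G (D : Set V) ↔ ∀ u, 1 ≤ #(G.dominatorsIn D u) := by
  simp only [IsDomSet, Nat.one_le_iff_ne_zero, Ne, card_eq_zero, ← nonempty_iff_ne_empty,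
    dominatorsIn, filter_nonempty_iff, mem_coe]

theorem isEffDomSet_iff_forall_card_dominatorsIn_eq_one {D : Finset V} :
    IsEffDomSet G (D : Set V) ↔ ∀ u, #(G.dominatorsIn D u) = 1 := by
  simp [IsEffDomSet, dominatorsIn, card_eq_one_iff_existsUnique]

variable [Fintype V]

theorem card_filter_eq_or_adj (d : V) : #{u | d = u ∨ G.Adj d u} = G.degree d + 1 := by
  have : ({u | d = u ∨ G.Adj d u} : Finset V) = insert d (G.neighborFinset d) := by
    ext u
    simp [eq_comm]
  rw [this, card_insert_of_notMem (by simp), card_neighborFinset_eq_degree]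

theorem sum_degree_add_one_eq_sum_card_dominatorsIn (D : Finset V) :
    ∑ d ∈ D, (G.degree d + 1) = ∑ u, #(G.dominatorsIn D u) := by
  simp_rw [← card_filter_eq_or_adj]
  exact sum_card_bipartiteAbove_eq_sum_card_bipartiteBelow _

theorem card_le_sum_degree_add_one {D : Finset V} (hD : IsDomSet G (D : Set V)) :
    Fintype.card V ≤ ∑ d ∈ D, (G.degree d + 1) := by
  rw [sum_degree_add_one_eq_sum_card_dominatorsIn, Fintype.card_eq_sum_ones]
  exact sum_le_sum fun u _ => isDomSet_iff_forall_one_le_card_dominatorsIn.mp hD u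

theorem isEffDomSet_iff_isDomSet_and_sum_degree_add_one_eq_card {D : Finset V} :
    IsEffDomSet G (D : Set V) ↔
      IsDomSet G (D : Set V) ∧ ∑ d ∈ D, (G.degree d + 1) = Fintype.card V := by
  rw [isEffDomSet_iff_forall_card_dominatorsIn_eq_one, isDomSet_iff_forall_one_le_card_dominatorsIn,
    sum_degree_add_one_eq_sum_card_dominatorsIn, Fintype.card_eq_sum_ones]
  constructor
  · intro h
    exact ⟨fun u => (h u).ge, by simp [h]⟩
  · rintro ⟨hdom, hsum⟩ u
    exact ((sum_eq_sum_iff_of_le fun u _ => hdom u).mp hsum.symm u (mem_univ u)).symm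

end SimpleGraph

theorem stmt1 {V : Type*} [Fintype V] [DecidableEq V] (G : SimpleGraph V)
    [DecidableRel G.Adj] (D : Finset V) :
    IsEffDomSet G (D : Set V) ↔
      (IsDomSet G (D : Set V) ∧
       ∑ v ∈ D, (G.degree v + 1) = Fintype.card V ∧
       (∀ D' : Finset V, IsDomSet G (D' : Set V) →
         ∑ v ∈ D, (G.degree v + 1) ≤ ∑ v ∈ D', (G.degree v + 1))) := by
  rw [isEffDomSet_iff_isDomSet_and_sum_degree_add_one_eq_card]
  constructor
  · rintro ⟨hdom, hsum⟩
    exact ⟨hdom, hsum, fun D' hD' => hsum ▸ card_le_sum_degree_add_one hD'⟩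
  · rintro ⟨hdom, hsum, -⟩
    exact ⟨hdom, hsum⟩
end

section
/- If G is a connected graph with an efficient dominating set D, and H is a homogeneous set of G, then |H ∩ D| ≤ 1. -/
/-!
Connectivity gives an edge leaving `H`. By homogeneity its outer end is adjacent to all of `H`,
so it is dominated by every vertex of `H ∩ D`; efficiency forces `H ∩ D` to have at most one element.
-/

open SimpleGraph

/-- `H` is a homogeneous set: `2 ≤ |H|`, `H ≠ V`, and every vertex outside `H`
is adjacent to all of `H` or to none of `H`. -/
def IsHomogeneousSet {V : Type*} (G : SimpleGraph V) (H : Set V) : Prop :=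
  H.Nontrivial ∧ H ≠ Set.univ ∧
    ∀ v ∉ H, (∀ h ∈ H, G.Adj v h) ∨ (∀ h ∈ H, ¬ G.Adj v h)

theorem IsEffDomSet.eq_of_adj {V : Type*} {G : SimpleGraph V} {D : Set V} (hD : IsEffDomSet G D)
    {d₁ d₂ y : V} (hd₁ : d₁ ∈ D) (hd₂ : d₂ ∈ D) (h₁ : G.Adj d₁ y) (h₂ : G.Adj d₂ y) :
    d₁ = d₂ :=
  (hD y).unique ⟨hd₁, .inr h₁⟩ ⟨hd₂, .inr h₂⟩

theorem IsHomogeneousSet.exists_forall_adj {V : Type*} {G : SimpleGraph V} {H : Set V}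
    (hH : IsHomogeneousSet G H) (hG : G.Preconnected) :
    ∃ y ∉ H, ∀ h ∈ H, G.Adj y h := by
  obtain ⟨⟨a, ha, -⟩, hne, hhom⟩ := hH
  obtain ⟨b, hb⟩ := (Set.ne_univ_iff_exists_notMem H).mp hne
  obtain ⟨e, -, hx, hy⟩ := (hG a b).some.exists_boundary_dart H ha hb
  refine ⟨e.snd, hy, (hhom e.snd hy).resolve_right fun hnone => ?_⟩
  exact hnone e.fst hx e.adj.symm

theorem stmt2_general {V : Type*} (G : SimpleGraph V) (hG : G.Connected)
    (D H : Set V) (hD : IsEffDomSet G D) (hH : IsHomogeneousSet G H) :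
    (H ∩ D).Subsingleton := by
  obtain ⟨y, -, hy⟩ := hH.exists_forall_adj hG.preconnected
  rintro d₁ ⟨hd₁H, hd₁D⟩ d₂ ⟨hd₂H, hd₂D⟩
  exact hD.eq_of_adj hd₁D hd₂D (hy d₁ hd₁H).symm (hy d₂ hd₂H).symm

theorem stmt2 {V : Type*} [Fintype V] (G : SimpleGraph V) (hG : G.Connected)
    (D H : Set V) (hD : IsEffDomSet G D) (hH : IsHomogeneousSet G H) :
    (H ∩ D).Subsingleton :=
  stmt2_general G hG D H hD hH
end

section
/- If G is a connected 2P₂-free graph with connected complement that has an efficient dominating set D, then no vertex of D belongs to any homogeneous set of G. -/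
/-!
Let `d ∈ D ∩ H`. A vertex outside `H` with a neighbour in `H` sees all of `H`, in particular `d`,
so it is neither in `D` nor dominated by another vertex of `D`; since `G` is connected such
vertices exist, and `D ∩ H = {d}`. The dominator of a second vertex of `H` then gives an edge
inside `H`, and the dominator of a vertex with no neighbour in `H` (one exists because `Gᶜ` is
connected) gives an edge among such vertices. These two edges induce a `2P₂`.
-/

open SimpleGraph

/-- `2P₂`: the disjoint union of two edges. -/
def twoP2 : SimpleGraph (Fin 4) := SimpleGraph.fromEdgeSet {s(0, 1), s(2, 3)}

theorem SimpleGraph.Preconnected.exists_adj_of_mem_of_notMem {V : Type*} {G : SimpleGraph V}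
    (hG : G.Preconnected) {S : Set V} {u v : V} (hu : u ∈ S) (hv : v ∉ S) :
    ∃ a ∈ S, ∃ b ∉ S, G.Adj a b := by
  obtain ⟨p⟩ := hG u v
  obtain ⟨⟨⟨a, b⟩, hab⟩, -, ha, hb⟩ := p.exists_boundary_dart S hu hv
  exact ⟨a, ha, b, hb, hab⟩

theorem nonempty_twoP2_embedding_of_anticomplete {V : Type*} {G : SimpleGraph V} {A B : Set V}
    (hAB : ∀ b ∈ B, ∀ a ∈ A, ¬ G.Adj b a)
    (hA : ∃ a₁ ∈ A, ∃ a₂ ∈ A, G.Adj a₁ a₂) (hB : ∃ b₁ ∈ B, ∃ b₂ ∈ B, G.Adj b₁ b₂) :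
    Nonempty (twoP2 ↪g G) := by
  obtain ⟨a₁, ha₁, a₂, ha₂, ha⟩ := hA
  obtain ⟨b₁, hb₁, b₂, hb₂, hb⟩ := hB
  have h11 := hAB b₁ hb₁ a₁ ha₁
  have h12 := hAB b₁ hb₁ a₂ ha₂
  have h21 := hAB b₂ hb₂ a₁ ha₁
  have h22 := hAB b₂ hb₂ a₂ ha₂
  have n11 : a₁ ≠ b₁ := by rintro rfl; exact hAB a₁ hb₁ a₂ ha₂ ha
  have n12 : a₁ ≠ b₂ := by rintro rfl; exact hAB a₁ hb₂ a₂ ha₂ ha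
  have n21 : a₂ ≠ b₁ := by rintro rfl; exact hAB a₂ hb₁ a₁ ha₁ ha.symm
  have n22 : a₂ ≠ b₂ := by rintro rfl; exact hAB a₂ hb₂ a₁ ha₁ ha.symm
  refine ⟨⟨⟨![a₁, a₂, b₁, b₂], fun i j hij => ?_⟩, fun {i j} => ?_⟩⟩
  · fin_cases i <;> fin_cases j <;>
      simp_all [G.ne_of_adj ha, G.ne_of_adj hb, eq_comm]
  · change G.Adj (![a₁, a₂, b₁, b₂] i) (![a₁, a₂, b₁, b₂] j) ↔ twoP2.Adj i j
    fin_cases i <;> fin_cases j <;>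
      simp [twoP2, fromEdgeSet_adj, ha, hb, ha.symm, hb.symm, h11, h12, h21, h22, G.adj_comm a₁,
        G.adj_comm a₂]

section

variable {V : Type*} {G : SimpleGraph V}

namespace IsHomogeneousSet

variable {H : Set V}

theorem compl (hH : IsHomogeneousSet G H) : IsHomogeneousSet Gᶜ H := by
  refine ⟨hH.1, hH.2.1, fun v hv => ?_⟩
  simp only [compl_adj]
  rcases hH.2.2 v hv with hc | ha
  · exact .inr fun h hh hvh => hvh.2 (hc h hh)
  · exact .inl fun h hh => ⟨fun hvh => hv (hvh ▸ hh), ha h hh⟩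

theorem exists_complete (hH : IsHomogeneousSet G H) (hG : G.Preconnected) :
    ∃ v ∉ H, ∀ h ∈ H, G.Adj v h := by
  obtain ⟨u, hu⟩ := hH.1.nonempty
  obtain ⟨v, hv⟩ := (Set.ne_univ_iff_exists_notMem H).1 hH.2.1
  obtain ⟨a, ha, b, hb, hab⟩ := hG.exists_adj_of_mem_of_notMem hu hv
  exact ⟨b, hb, (hH.2.2 b hb).resolve_right fun hanti => hanti a ha hab.symm⟩

theorem exists_anticomplete (hH : IsHomogeneousSet G H) (hGc : Gᶜ.Preconnected) :
    ∃ v ∉ H, ∀ h ∈ H, ¬ G.Adj v h := by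
  obtain ⟨v, hv, hc⟩ := hH.compl.exists_complete hGc
  exact ⟨v, hv, fun h hh => (hc h hh).2⟩

end IsHomogeneousSet

namespace IsEffDomSet

variable {D H : Set V} {d e : V}

theorem eq_of_dominates (hD : IsEffDomSet G D) {u d₁ d₂ : V} (h₁ : d₁ ∈ D) (h₂ : d₂ ∈ D)
    (hd₁ : d₁ = u ∨ G.Adj d₁ u) (hd₂ : d₂ = u ∨ G.Adj d₂ u) : d₁ = d₂ :=
  (hD u).unique ⟨h₁, hd₁⟩ ⟨h₂, hd₂⟩

theorem not_adj (hD : IsEffDomSet G D) (hd : d ∈ D) (he : e ∈ D) : ¬ G.Adj d e := fun h =>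
  G.ne_of_adj h (hD.eq_of_dominates hd he (.inr h) (.inl rfl))

theorem inter_homogeneousSet_subsingleton (hD : IsEffDomSet G D) (hH : IsHomogeneousSet G H)
    (hG : G.Preconnected) : (D ∩ H).Subsingleton := by
  rintro x ⟨hxD, hxH⟩ y ⟨hyD, hyH⟩
  obtain ⟨v, -, hv⟩ := hH.exists_complete hG
  exact hD.eq_of_dominates hxD hyD (.inr (hv x hxH).symm) (.inr (hv y hyH).symm)

variable (hD : IsEffDomSet G D) (hH : IsHomogeneousSet G H) (hd : d ∈ D) (hdH : d ∈ H)
include hD hH hd hdH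

theorem anticomplete_of_notMem (he : e ∈ D) (heH : e ∉ H) : ∀ h ∈ H, ¬ G.Adj e h :=
  (hH.2.2 e heH).resolve_left fun hc => hD.not_adj he hd (hc d hdH)

theorem exists_adj_in_homogeneousSet (hG : G.Preconnected) : ∃ a ∈ H, ∃ b ∈ H, G.Adj a b := by
  obtain ⟨x, hxH, hxd⟩ := hH.1.exists_ne d
  obtain ⟨e, ⟨heD, hex⟩, -⟩ := hD x
  have heH : e ∈ H := by
    by_contra heH
    rcases hex with rfl | hadj
    · exact heH hxH
    · exact hD.anticomplete_of_notMem hH hd hdH heD heH x hxH hadj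
  have hne : e ≠ x := fun hex =>
    hxd (hD.inter_homogeneousSet_subsingleton hH hG ⟨hex ▸ heD, hxH⟩ ⟨hd, hdH⟩)
  exact ⟨e, heH, x, hxH, hex.resolve_left hne⟩

theorem exists_adj_anticomplete_to_homogeneousSet (hG : G.Preconnected)
    (hGc : Gᶜ.Preconnected) :
    ∃ a ∈ {v | ∀ h ∈ H, ¬ G.Adj v h}, ∃ b ∈ {v | ∀ h ∈ H, ¬ G.Adj v h}, G.Adj a b := by
  obtain ⟨m, hmH, hm⟩ := hH.exists_anticomplete hGc
  obtain ⟨e, ⟨heD, hem⟩, -⟩ := hD m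
  have heH : e ∉ H := by
    intro heH
    rcases hem with rfl | hadj
    · exact hmH heH
    · exact hm e heH hadj.symm
  have he := hD.anticomplete_of_notMem hH hd hdH heD heH
  by_cases hme : e = m
  · subst hme
    -- `m` is its own dominator, so take any edge at `m` instead.
    obtain ⟨x, hx : x = e, u, -, hxu⟩ := hG.exists_adj_of_mem_of_notMem (S := {e}) rfl
      (fun hde : d = e => heH (hde ▸ hdH))
    have heu : G.Adj e u := hx ▸ hxu
    have huH : u ∉ H := fun huH => he u huH heu
    have hu : ∀ h ∈ H, ¬ G.Adj u h := (hH.2.2 u huH).resolve_left fun hc =>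
      heH (hD.eq_of_dominates hd heD (.inr (hc d hdH).symm) (.inr heu) ▸ hdH)
    exact ⟨_, he, u, hu, heu⟩
  · exact ⟨e, he, m, hm, hem.resolve_left hme⟩

end IsEffDomSet

end

theorem stmt3_general {V : Type*} (G : SimpleGraph V)
    (hG : G.Connected) (hGc : Gᶜ.Connected)
    (hfree : IsEmpty (twoP2 ↪g G))
    (D : Set V) (hD : IsEffDomSet G D) :
    ∀ d ∈ D, ∀ H : Set V, IsHomogeneousSet G H → d ∉ H := by
  intro d hd H hH hdH
  exact hfree.false (nonempty_twoP2_embedding_of_anticomplete (fun _ hb => hb)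
    (hD.exists_adj_in_homogeneousSet hH hd hdH hG.preconnected)
    (hD.exists_adj_anticomplete_to_homogeneousSet hH hd hdH hG.preconnected
      hGc.preconnected)).some

theorem stmt3 {V : Type*} [Fintype V] (G : SimpleGraph V)
    (hG : G.Connected) (hGc : Gᶜ.Connected)
    (hfree : IsEmpty (twoP2 ↪g G))
    (D : Set V) (hD : IsEffDomSet G D) :
    ∀ d ∈ D, ∀ H : Set V, IsHomogeneousSet G H → d ∉ H :=
  stmt3_general G hG hGc hfree D hD
end

section
/- If G is a connected 2P₂-free graph with connected complement that has an efficient dominating set D, then for every d ∈ D with |N(d)| ≥ 2, the open neighborhood N(d) is a homogeneous set of G. -/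
/-!
Let `v ∉ N(d)` see some `h₁ ∈ N(d)` but miss some `h₂ ∈ N(d)`. The vertex `v` is dominated by
some `d' ∈ D`; efficiency forces `d' ≠ d` and `d' ≠ v` (else `h₁` would be dominated twice), so
`d'v` is an edge, and it also forbids `d'` from touching `d` or `h₂`. Hence the edges `d'v` and
`dh₂` induce a `2P₂`.
-/

open SimpleGraph

theorem nonempty_twoP2_embedding_of_adj {V : Type*} {G : SimpleGraph V} {a b c e : V}
    (hab : G.Adj a b) (hce : G.Adj c e)
    (hac : ¬G.Adj a c) (hae : ¬G.Adj a e) (hbc : ¬G.Adj b c) (hbe : ¬G.Adj b e) :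
    Nonempty (twoP2 ↪g G) := by
  have hac' : a ≠ c := by rintro rfl; exact hae hce
  have hae' : a ≠ e := by rintro rfl; exact hac hce.symm
  have hbc' : b ≠ c := by rintro rfl; exact hbe hce
  have hbe' : b ≠ e := by rintro rfl; exact hbc hce.symm
  refine ⟨⟨⟨![a, b, c, e], ?_⟩, ?_⟩⟩
  · intro i j hij
    fin_cases i <;> fin_cases j <;>
      simp_all [hab.ne, hce.ne, eq_comm]
  · intro i j
    change G.Adj (![a, b, c, e] i) (![a, b, c, e] j) ↔ twoP2.Adj i j
    fin_cases i <;> fin_cases j <;>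
      simp [twoP2, hab, hce, hab.symm, hce.symm, hac, hae, hbc, hbe, G.adj_comm c, G.adj_comm e]

namespace IsEffDomSet

variable {V : Type*} {G : SimpleGraph V} {D : Set V}

theorem exists_mem_dominates (hD : IsEffDomSet G D) (u : V) :
    ∃ d ∈ D, d = u ∨ G.Adj d u :=
  (hD u).exists.imp fun _ h => ⟨h.1, h.2⟩

theorem eq_of_dominates_s4 (hD : IsEffDomSet G D) {d d' u : V} (hd : d ∈ D) (hd' : d' ∈ D)
    (hdu : d = u ∨ G.Adj d u) (hd'u : d' = u ∨ G.Adj d' u) : d = d' :=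
  (hD u).unique ⟨hd, hdu⟩ ⟨hd', hd'u⟩

theorem adj_all_or_none_of_notMem_neighborSet (hfree : IsEmpty (twoP2 ↪g G))
    (hD : IsEffDomSet G D) {d v : V} (hdD : d ∈ D) (hv : v ∉ G.neighborSet d) :
    (∀ h ∈ G.neighborSet d, G.Adj v h) ∨ (∀ h ∈ G.neighborSet d, ¬G.Adj v h) := by
  by_contra! ⟨⟨h₂, hdh₂, hvh₂⟩, h₁, hdh₁, hvh₁⟩
  rw [mem_neighborSet] at hv hdh₁ hdh₂
  obtain ⟨d', hd'D, hd'_dom⟩ := hD.exists_mem_dominates v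
  have hd'd : d' ≠ d := by
    rintro rfl
    rcases hd'_dom with rfl | h
    · exact hvh₂ hdh₂
    · exact hv h
  have hd'v : G.Adj d' v := by
    refine hd'_dom.resolve_left ?_
    rintro rfl
    exact hd'd (hD.eq_of_dominates_s4 hd'D hdD (.inr hvh₁) (.inr hdh₁))
  have hd'_not_dom (u : V) (hu : d = u ∨ G.Adj d u) : ¬G.Adj d' u := fun h =>
    hd'd (hD.eq_of_dominates_s4 hd'D hdD (.inr h) hu)
  exact hfree.false (nonempty_twoP2_embedding_of_adj hd'v hdh₂ (hd'_not_dom d (.inl rfl))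
    (hd'_not_dom h₂ (.inr hdh₂)) (fun h => hv h.symm) hvh₂).some

end IsEffDomSet

theorem stmt4_general {V : Type*} (G : SimpleGraph V)
    (hfree : IsEmpty (twoP2 ↪g G))
    (D : Set V) (hD : IsEffDomSet G D) :
    ∀ d ∈ D, 2 ≤ (G.neighborSet d).ncard → IsHomogeneousSet G (G.neighborSet d) := by
  intro d hdD hcard
  exact ⟨(Set.one_lt_ncard_iff_nontrivial_and_finite.mp hcard).1, G.neighborSet_ne_univ d,
    fun v hv => hD.adj_all_or_none_of_notMem_neighborSet hfree hdD hv⟩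

theorem stmt4 {V : Type*} [Fintype V] (G : SimpleGraph V)
    (hG : G.Connected) (hGc : Gᶜ.Connected)
    (hfree : IsEmpty (twoP2 ↪g G))
    (D : Set V) (hD : IsEffDomSet G D) :
    ∀ d ∈ D, 2 ≤ (G.neighborSet d).ncard → IsHomogeneousSet G (G.neighborSet d) :=
  stmt4_general G hfree D hD
end

section
/- In a P₅-free graph G, no midpoint of an induced P₄ belongs to any efficient dominating set of G: if vertices a,b,c,d induce a path a-b-c-d in G and D is an efficient dominating set of G, then b ∉ D and c ∉ D. -/
/-!
If `b ∈ D`, then `b` is the only vertex of `D` dominating `a`, `b` or `c`. The vertex `e ∈ D`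
dominating `d` is therefore adjacent to `d` but to none of `a`, `b`, `c`, so `a-b-c-d-e` is an
induced `P₅`. The case `c ∈ D` is the same argument for the reversed path `d-c-b-a`.
-/

open SimpleGraph

namespace SimpleGraph

theorem pathGraph_eq_of_forall_adj_iff {n : ℕ} (hn : 4 ≤ n) {i j : Fin n}
    (h : ∀ k, (pathGraph n).Adj i k ↔ (pathGraph n).Adj j k) : i = j := by
  simp only [pathGraph_adj] at h
  by_contra hij
  wlog hlt : i < j generalizing i j
  · exact this (fun k => (h k).symm) (Ne.symm hij) (by omega)
  rcases Nat.eq_zero_or_pos i.val with hi | hi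
  · have h1 := h ⟨1, by omega⟩
    have h3 := h ⟨3, by omega⟩
    simp only at h1 h3
    omega
  · have := h ⟨i.val - 1, by omega⟩
    simp only at this
    omega

variable {V : Type*} {G : SimpleGraph V}

/-- No injectivity hypothesis is needed: on at least four vertices, neighbourhoods in the path
separate its vertices. -/
def Embedding.ofAdjIffPathGraph {n : ℕ} (hn : 4 ≤ n) (f : Fin n → V)
    (hf : ∀ i j, G.Adj (f i) (f j) ↔ (pathGraph n).Adj i j) : pathGraph n ↪g G where
  toFun := f
  inj' i j hij := pathGraph_eq_of_forall_adj_iff hn fun k => by rw [← hf, ← hf, hij]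
  map_rel_iff' := hf _ _

theorem nonempty_pathGraph_five_embedding {a b c d e : V}
    (hab : G.Adj a b) (hbc : G.Adj b c) (hcd : G.Adj c d) (hde : G.Adj d e)
    (hac : ¬ G.Adj a c) (had : ¬ G.Adj a d) (hae : ¬ G.Adj a e)
    (hbd : ¬ G.Adj b d) (hbe : ¬ G.Adj b e) (hce : ¬ G.Adj c e) :
    Nonempty (pathGraph 5 ↪g G) := by
  refine ⟨Embedding.ofAdjIffPathGraph (by norm_num) ![a, b, c, d, e] fun i j => ?_⟩
  fin_cases i <;> fin_cases j <;>
    simp [pathGraph_adj, hab, hbc, hcd, hde, hab.symm, hbc.symm, hcd.symm, hde.symm,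
      hac, had, hae, hbd, hbe, hce, G.adj_comm _ a, G.adj_comm _ b, G.adj_comm _ c]

end SimpleGraph

namespace IsEffDomSet

variable {V : Type*} {G : SimpleGraph V} {D : Set V}

theorem not_dominates_of_ne (hD : IsEffDomSet G D) {x y u : V} (hx : x ∈ D) (hy : y ∈ D)
    (hxy : x ≠ y) (hxu : x = u ∨ G.Adj x u) : ¬ (y = u ∨ G.Adj y u) := fun hyu =>
  hxy ((hD u).unique ⟨hx, hxu⟩ ⟨hy, hyu⟩)

theorem notMem_of_pathGraph_five_free (hD : IsEffDomSet G D)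
    (hfree : IsEmpty (pathGraph 5 ↪g G)) {a b c d : V}
    (hab : G.Adj a b) (hbc : G.Adj b c) (hcd : G.Adj c d)
    (hac : ¬ G.Adj a c) (had : ¬ G.Adj a d) (hbd : ¬ G.Adj b d) (hbdne : b ≠ d) :
    b ∉ D := by
  intro hb
  obtain ⟨e, ⟨he, hed⟩, -⟩ := hD d
  have heb : e ≠ b := by
    rintro rfl
    rcases hed with rfl | h
    exacts [hbdne rfl, hbd h]
  have hec := hD.not_dominates_of_ne hb he heb.symm (Or.inr hbc)
  have hde : G.Adj d e := by
    rcases hed with rfl | h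
    exacts [absurd (Or.inr hcd.symm) hec, h.symm]
  have hae : ¬ G.Adj a e := fun h =>
    hD.not_dominates_of_ne hb he heb.symm (Or.inr hab.symm) (Or.inr h.symm)
  have hbe : ¬ G.Adj b e := fun h =>
    hD.not_dominates_of_ne hb he heb.symm (Or.inl rfl) (Or.inr h.symm)
  have hce : ¬ G.Adj c e := fun h => hec (Or.inr h.symm)
  exact (nonempty_pathGraph_five_embedding hab hbc hcd hde hac had hae hbd hbe hce).elim
    hfree.false

end IsEffDomSet

theorem stmt6_general {V : Type*} (G : SimpleGraph V)
    (hfree : IsEmpty (SimpleGraph.pathGraph 5 ↪g G))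
    (D : Set V) (hD : IsEffDomSet G D)
    (a b c d : V)
    (hab : G.Adj a b) (hbc : G.Adj b c) (hcd : G.Adj c d)
    (hac : ¬ G.Adj a c) (had : ¬ G.Adj a d) (hbd : ¬ G.Adj b d)
    (hacne : a ≠ c) (hbdne : b ≠ d) :
    b ∉ D ∧ c ∉ D :=
  ⟨hD.notMem_of_pathGraph_five_free hfree hab hbc hcd hac had hbd hbdne,
    hD.notMem_of_pathGraph_five_free hfree hcd.symm hbc.symm hab.symm
      (fun h => hbd h.symm) (fun h => had h.symm) (fun h => hac h.symm) hacne.symm⟩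

theorem stmt6 {V : Type*} [Fintype V] (G : SimpleGraph V)
    (hfree : IsEmpty (SimpleGraph.pathGraph 5 ↪g G))
    (D : Set V) (hD : IsEffDomSet G D)
    (a b c d : V)
    (hab : G.Adj a b) (hbc : G.Adj b c) (hcd : G.Adj c d)
    (hac : ¬ G.Adj a c) (had : ¬ G.Adj a d) (hbd : ¬ G.Adj b d)
    (hacne : a ≠ c) (hadne : a ≠ d) (hbdne : b ≠ d) :
    b ∉ D ∧ c ∉ D :=
  stmt6_general G hfree D hD a b c d hab hbc hcd hac had hbd hacne hbdne
end

section
/- Let G be a connected P₅-free graph, v a vertex, and N₁, N₂, N₃ its distance levels with N₄ = ∅. Suppose D ⊆ V contains v, for every w ∈ N₂ the set N(w) ∩ N₃ is exactly the vertex set of one connected component of G[N₃], and D consists of v together with exactly one universal vertex from each component of G[N₃] (a vertex adjacent to all other vertices of its component). Then D is an efficient dominating set of G. -/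
open SimpleGraph

/-- The vertex set of the connected component of `u` in the subgraph of `G`
induced on `S` (empty if `u ∉ S`). -/
def compOf {V : Type*} (G : SimpleGraph V) (S : Set V) (u : V) : Set V :=
  {w | ∃ (hu : u ∈ S) (hw : w ∈ S), (G.induce S).Reachable ⟨u, hu⟩ ⟨w, hw⟩}

/-! As `G` is connected and `N₄ = ∅`, every vertex lies in `N₀ ∪ N₁ ∪ N₂ ∪ N₃`. Since
`D \ {v} ⊆ N₃`, the vertex `v` is the only vertex of `D` that can dominate a vertex of
`N₀ ∪ N₁`. A vertex `u ∈ N₂` is dominated exactly by the vertices of `D` in `N(u) ∩ N₃`, which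
is a single component of `G[N₃]`; a vertex `u ∈ N₃` is dominated exactly by the vertices of `D`
in its own component, because the chosen vertex is universal there. In both cases the
component contains exactly one vertex of `D`. -/

namespace SimpleGraph

variable {V : Type*} {G : SimpleGraph V}

lemma Connected.exists_dist_eq_of_le (hG : G.Connected) {v w : V} {n : ℕ}
    (hn : n ≤ G.dist v w) : ∃ u, G.dist v u = n := by
  obtain ⟨p, hp⟩ := (hG v w).exists_walk_length_eq_dist
  refine ⟨p.getVert n, le_antisymm ?_ ?_⟩
  · simpa [Walk.take_length, hp, hn] using dist_le (p.take n)
  · have hdrop := dist_le (p.drop n)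
    have htri := hG.dist_triangle (u := v) (v := p.getVert n) (w := w)
    rw [Walk.drop_length] at hdrop
    omega

lemma Connected.dist_lt_of_forall_dist_ne (hG : G.Connected) {v : V} {n : ℕ}
    (h : ∀ u, G.dist v u ≠ n) (w : V) : G.dist v w < n := by
  by_contra! hw
  obtain ⟨u, hu⟩ := hG.exists_dist_eq_of_le hw
  exact h u hu

lemma dist_le_dist_add_one_of_eq_or_adj {v d u : V} (h : d = u ∨ G.Adj d u) :
    G.dist v d ≤ G.dist v u + 1 := by
  rcases h with rfl | hadj
  · omega
  · rcases hadj.diff_dist_adj (u := v) with h | h | h <;> omega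

lemma not_eq_or_adj_of_two_le_dist {v u : V} (h : 2 ≤ G.dist v u) : ¬(v = u ∨ G.Adj v u) := by
  rintro (rfl | hadj)
  · simp at h
  · rw [dist_eq_one_iff_adj.mpr hadj] at h
    omega

end SimpleGraph

section Dominators

variable {V : Type*} {G : SimpleGraph V} {D S : Set V} {v u : V}

lemma existsUnique_dominator_of_dist_le_one (hG : G.Connected) (hvD : v ∈ D)
    (hD : ∀ d ∈ D, d ≠ v → 2 < G.dist v d) (hu : G.dist v u ≤ 1) :
    ∃! d, d ∈ D ∧ (d = u ∨ G.Adj d u) := by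
  refine ⟨v, ⟨hvD, ?_⟩, ?_⟩
  · rcases Nat.le_one_iff_eq_zero_or_eq_one.mp hu with h | h
    · exact Or.inl (hG.dist_eq_zero_iff.mp h)
    · exact Or.inr (dist_eq_one_iff_adj.mp h)
  · rintro d ⟨hdD, hdu⟩
    by_contra hdv
    have := dist_le_dist_add_one_of_eq_or_adj (v := v) hdu
    have := hD d hdD hdv
    omega

lemma existsUnique_dominator_of_not_mem (hvu : ¬(v = u ∨ G.Adj v u))
    (hD : ∀ d ∈ D, d ≠ v → d ∈ S) (hu : u ∉ S)
    (hone : ∃! d, d ∈ D ∧ G.Adj u d ∧ d ∈ S) :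
    ∃! d, d ∈ D ∧ (d = u ∨ G.Adj d u) := by
  refine (existsUnique_congr fun d => ?_).mp hone
  constructor
  · rintro ⟨hdD, hud, -⟩
    exact ⟨hdD, Or.inr hud.symm⟩
  · rintro ⟨hdD, hdu⟩
    have hdS : d ∈ S := hD d hdD (by rintro rfl; exact hvu hdu)
    rcases hdu with rfl | hdu
    · exact absurd hdS hu
    · exact ⟨hdD, hdu.symm, hdS⟩

lemma existsUnique_dominator_of_mem (hvu : ¬(v = u ∨ G.Adj v u)) (hvS : v ∉ S)
    (hD : ∀ d ∈ D, d ≠ v → d ∈ S ∧ ∀ w ∈ compOf G S d, w ≠ d → G.Adj d w) (hu : u ∈ S)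
    (hone : ∃! d, d ∈ D ∧ d ∈ compOf G S u) :
    ∃! d, d ∈ D ∧ (d = u ∨ G.Adj d u) := by
  refine (existsUnique_congr fun d => ?_).mp hone
  constructor
  · rintro ⟨hdD, _, hdS, hud⟩
    have hdv : d ≠ v := by rintro rfl; exact hvS hdS
    refine ⟨hdD, ?_⟩
    by_cases hdu : d = u
    · exact Or.inl hdu
    · exact Or.inr ((hD d hdD hdv).2 u ⟨hdS, hu, hud.symm⟩ (Ne.symm hdu))
  · rintro ⟨hdD, hdu⟩
    have hdv : d ≠ v := by rintro rfl; exact hvu hdu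
    obtain ⟨hdS, -⟩ := hD d hdD hdv
    refine ⟨hdD, ?_⟩
    rcases hdu with rfl | hdu
    · exact ⟨hdS, hdS, Reachable.refl _⟩
    · exact ⟨hu, hdS, Adj.reachable (by simpa using hdu.symm)⟩

end Dominators

theorem stmt9_general {V : Type*} (G : SimpleGraph V) (hG : G.Connected)
    (v : V) (N : ℕ → Set V) (hN : ∀ i, N i = {w | G.dist v w = i})
    (hN4 : N 4 = ∅)
    (D : Set V) (hvD : v ∈ D)
    -- for every w ∈ N₂, N(w) ∩ N₃ is exactly one component of G[N₃]
    (hw : ∀ w ∈ N 2, ∃ u ∈ N 3, {x | G.Adj w x ∧ x ∈ N 3} = compOf G (N 3) u)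
    -- every vertex of D other than v is a universal vertex of its component of G[N₃]
    (hDuniv : ∀ d ∈ D, d ≠ v → d ∈ N 3 ∧
      ∀ w ∈ compOf G (N 3) d, w ≠ d → G.Adj d w)
    -- D contains exactly one vertex from each component of G[N₃]
    (hDone : ∀ u ∈ N 3, ∃! d : V, d ∈ D ∧ d ∈ compOf G (N 3) u) :
    IsEffDomSet G D := by
  have hmem (i : ℕ) (u : V) : u ∈ N i ↔ G.dist v u = i := by rw [hN i]; rfl
  have hD3 (d : V) (hdD : d ∈ D) (hdv : d ≠ v) : G.dist v d = 3 :=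
    (hmem 3 d).mp (hDuniv d hdD hdv).1
  have hle : ∀ u, G.dist v u < 4 :=
    hG.dist_lt_of_forall_dist_ne fun u hu => by simpa [hN4] using (hmem 4 u).mpr hu
  intro u
  obtain hu | hu | hu : G.dist v u ≤ 1 ∨ G.dist v u = 2 ∨ G.dist v u = 3 := by
    have := hle u; omega
  · exact existsUnique_dominator_of_dist_le_one hG hvD (fun d hdD hdv => by
      rw [hD3 d hdD hdv]; omega) hu
  · obtain ⟨u₀, hu₀, hcomp⟩ := hw u ((hmem 2 u).mpr hu)
    refine existsUnique_dominator_of_not_mem (not_eq_or_adj_of_two_le_dist hu.ge)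
      (fun d hdD hdv => (hDuniv d hdD hdv).1) (by simp [hmem, hu]) ?_
    have hone := hDone u₀ hu₀
    rwa [← hcomp] at hone
  · have huN : u ∈ N 3 := (hmem 3 u).mpr hu
    exact existsUnique_dominator_of_mem (not_eq_or_adj_of_two_le_dist (by omega))
      (by simp [hmem]) hDuniv huN (hDone u huN)

theorem stmt9 {V : Type*} [Fintype V] (G : SimpleGraph V) (hG : G.Connected)
    (hfree : IsEmpty (SimpleGraph.pathGraph 5 ↪g G))
    (v : V) (N : ℕ → Set V) (hN : ∀ i, N i = {w | G.dist v w = i})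
    (hN4 : N 4 = ∅)
    (D : Set V) (hvD : v ∈ D)
    -- for every w ∈ N₂, N(w) ∩ N₃ is exactly one component of G[N₃]
    (hw : ∀ w ∈ N 2, ∃ u ∈ N 3, {x | G.Adj w x ∧ x ∈ N 3} = compOf G (N 3) u)
    -- every vertex of D other than v is a universal vertex of its component of G[N₃]
    (hDuniv : ∀ d ∈ D, d ≠ v → d ∈ N 3 ∧
      ∀ w ∈ compOf G (N 3) d, w ≠ d → G.Adj d w)
    -- D contains exactly one vertex from each component of G[N₃]
    (hDone : ∀ u ∈ N 3, ∃! d : V, d ∈ D ∧ d ∈ compOf G (N 3) u) :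
    IsEffDomSet G D :=
  stmt9_general G hG v N hN hN4 D hvD hw hDuniv hDone
end

section
/- Let G be a connected {P₆, S₁,₂,₂}-free graph with efficient dominating set D, v ∈ D, and distance levels Nᵢ from v. Then at most one vertex of D ∩ N₃ has a neighbor in N₄. -/
open SimpleGraph

/-- `S₁,₂,₂`: a chordless path 0-1-2-3-4 plus a vertex 5 adjacent only to 2. -/
def S122 : SimpleGraph (Fin 6) :=
  SimpleGraph.fromEdgeSet {s(0, 1), s(1, 2), s(2, 3), s(3, 4), s(2, 5)}

/-! Walk back from `d₁, d₂ ∈ N₃` along shortest paths `v a₁ b₁ d₁` and `v a₂ b₂ d₂`. Vertices two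
levels apart are never adjacent, and efficiency forbids every edge between the closed
neighbourhoods of `d₁` and `d₂`. If `b₁ ≁ b₂`, this leaves an induced `S₁,₂,₂` (when some `aᵢ`
sees the other `b`) or an induced `P₆` through `a₁ a₂` or through `v`. If `b₁ ∼ b₂`, the
neighbours `xᵢ ∈ N₄` of `dᵢ` give an induced `P₆`: `a₁ b₁ d₁ x₁ x₂ d₂` when `x₁ ∼ x₂`, and
`x₁ d₁ b₁ b₂ d₂ x₂` otherwise. -/

namespace SimpleGraph

variable {V : Type*} {G : SimpleGraph V}

lemma exists_adj_dist_eq_of_dist_eq_add_one {v w : V} {n : ℕ} (h : G.dist v w = n + 1) :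
    ∃ u, G.Adj u w ∧ G.dist v u = n := by
  have hwv : G.Reachable w v := (Reachable.of_dist_ne_zero (by omega)).symm
  obtain ⟨p, hp⟩ := hwv.exists_walk_length_eq_dist
  cases p with
  | nil => simp at h
  | cons hwu q =>
    refine ⟨_, hwu.symm, ?_⟩
    have hq := dist_le q
    have hvu := hwu.diff_dist_adj (u := v)
    rw [Walk.length_cons, dist_comm] at hp
    rw [dist_comm] at hq
    omega

/-- Injectivity of `f` comes for free: two vertices with the same image have the same
neighbours in `H`. -/
def Embedding.ofAdjIff {W : Type*} {H : SimpleGraph W} (hH : Function.Injective H.neighborSet)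
    (f : W → V) (hf : ∀ i j, G.Adj (f i) (f j) ↔ H.Adj i j) : H ↪g G where
  toFun := f
  inj' i j hij := hH (Set.ext fun k => by rw [mem_neighborSet, mem_neighborSet, ← hf, ← hf, hij])
  map_rel_iff' := hf _ _

lemma pathGraph_six_neighborSet_injective : Function.Injective (pathGraph 6).neighborSet := by
  intro i j h
  have := fun k => Set.ext_iff.mp h k
  simp only [mem_neighborSet, pathGraph_adj] at this
  fin_cases i <;> fin_cases j <;> first | rfl | (exfalso; revert this; decide)

lemma S122_neighborSet_injective : Function.Injective S122.neighborSet := by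
  intro i j h
  have := fun k => Set.ext_iff.mp h k
  simp only [mem_neighborSet, S122, fromEdgeSet_adj, Set.mem_insert_iff,
    Set.mem_singleton_iff] at this
  fin_cases i <;> fin_cases j <;> first | rfl | (exfalso; revert this; decide)

lemma nonempty_pathGraph_six_embedding {w₀ w₁ w₂ w₃ w₄ w₅ : V}
    (h01 : G.Adj w₀ w₁) (h12 : G.Adj w₁ w₂) (h23 : G.Adj w₂ w₃) (h34 : G.Adj w₃ w₄)
    (h45 : G.Adj w₄ w₅)
    (h02 : ¬G.Adj w₀ w₂) (h03 : ¬G.Adj w₀ w₃) (h04 : ¬G.Adj w₀ w₄) (h05 : ¬G.Adj w₀ w₅)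
    (h13 : ¬G.Adj w₁ w₃) (h14 : ¬G.Adj w₁ w₄) (h15 : ¬G.Adj w₁ w₅)
    (h24 : ¬G.Adj w₂ w₄) (h25 : ¬G.Adj w₂ w₅) (h35 : ¬G.Adj w₃ w₅) :
    Nonempty (pathGraph 6 ↪g G) := by
  refine ⟨Embedding.ofAdjIff pathGraph_six_neighborSet_injective ![w₀, w₁, w₂, w₃, w₄, w₅] ?_⟩
  intro i j
  fin_cases i <;> fin_cases j <;> simp [pathGraph_adj, G.adj_comm, *]

lemma nonempty_S122_embedding {w₀ w₁ w₂ w₃ w₄ w₅ : V}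
    (h01 : G.Adj w₀ w₁) (h12 : G.Adj w₁ w₂) (h23 : G.Adj w₂ w₃) (h34 : G.Adj w₃ w₄)
    (h25 : G.Adj w₂ w₅)
    (h02 : ¬G.Adj w₀ w₂) (h03 : ¬G.Adj w₀ w₃) (h04 : ¬G.Adj w₀ w₄) (h05 : ¬G.Adj w₀ w₅)
    (h13 : ¬G.Adj w₁ w₃) (h14 : ¬G.Adj w₁ w₄) (h15 : ¬G.Adj w₁ w₅)
    (h24 : ¬G.Adj w₂ w₄) (h35 : ¬G.Adj w₃ w₅) (h45 : ¬G.Adj w₄ w₅) :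
    Nonempty (S122 ↪g G) := by
  refine ⟨Embedding.ofAdjIff S122_neighborSet_injective ![w₀, w₁, w₂, w₃, w₄, w₅] ?_⟩
  intro i j
  fin_cases i <;> fin_cases j <;>
    simp [S122, fromEdgeSet_adj, G.adj_comm, *]

lemma parents_adj_of_dist_eq_three {v b₁ b₂ d₁ d₂ : V} (hP6 : IsEmpty (pathGraph 6 ↪g G))
    (hS : IsEmpty (S122 ↪g G)) (hb₁ : G.dist v b₁ = 2) (hb₂ : G.dist v b₂ = 2)
    (hd₁ : G.dist v d₁ = 3) (hd₂ : G.dist v d₂ = 3) (hbd₁ : G.Adj b₁ d₁) (hbd₂ : G.Adj b₂ d₂)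
    (hd₁d₂ : ¬G.Adj d₁ d₂) (hb₁d₂ : ¬G.Adj b₁ d₂) (hb₂d₁ : ¬G.Adj b₂ d₁) : G.Adj b₁ b₂ := by
  classical
  obtain ⟨a₁, hab₁, ha₁⟩ := exists_adj_dist_eq_of_dist_eq_add_one hb₁
  obtain ⟨a₂, hab₂, ha₂⟩ := exists_adj_dist_eq_of_dist_eq_add_one hb₂
  have hva₁ : G.Adj v a₁ := dist_eq_one_iff_adj.mp ha₁
  have hva₂ : G.Adj v a₂ := dist_eq_one_iff_adj.mp ha₂
  have hv₀ : G.dist v v = 0 := dist_self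
  by_contra hb₁b₂
  suffices Nonempty (pathGraph 6 ↪g G) ∨ Nonempty (S122 ↪g G) from
    this.elim (·.elim hP6.false) (·.elim hS.false)
  refine if ha₁b₂ : G.Adj a₁ b₂ then
      .inr (nonempty_S122_embedding hbd₁.symm hab₁.symm ha₁b₂ hbd₂ hva₁.symm
        ?_ ?_ ?_ ?_ ?_ ?_ ?_ ?_ ?_ ?_)
    else if ha₂b₁ : G.Adj a₂ b₁ then
      .inr (nonempty_S122_embedding hbd₁.symm ha₂b₁.symm hab₂ hbd₂ hva₂.symm
        ?_ ?_ ?_ ?_ ?_ ?_ ?_ ?_ ?_ ?_)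
    else if ha₁a₂ : G.Adj a₁ a₂ then
      .inl (nonempty_pathGraph_six_embedding hbd₁.symm hab₁.symm ha₁a₂ hab₂ hbd₂
        ?_ ?_ ?_ ?_ ?_ ?_ ?_ ?_ ?_ ?_)
    else
      .inl (nonempty_pathGraph_six_embedding hbd₁.symm hab₁.symm hva₁.symm hva₂ hab₂
        ?_ ?_ ?_ ?_ ?_ ?_ ?_ ?_ ?_ ?_)
  -- each non-edge is a hypothesis or joins two levels of `v` at least two apart
  all_goals first
    | assumption
    | (rw [adj_comm]; assumption)
    | (intro h; have := h.diff_dist_adj (u := v); omega)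

lemma parents_not_adj_of_dist_eq_four {v b₁ b₂ d₁ d₂ x₁ x₂ : V}
    (hP6 : IsEmpty (pathGraph 6 ↪g G)) (hb₁ : G.dist v b₁ = 2) (hb₂ : G.dist v b₂ = 2)
    (hd₁ : G.dist v d₁ = 3) (hd₂ : G.dist v d₂ = 3) (hx₁ : G.dist v x₁ = 4)
    (hx₂ : G.dist v x₂ = 4) (hbd₁ : G.Adj b₁ d₁) (hbd₂ : G.Adj b₂ d₂) (hdx₁ : G.Adj d₁ x₁)
    (hdx₂ : G.Adj d₂ x₂) (hd₁d₂ : ¬G.Adj d₁ d₂) (hb₁d₂ : ¬G.Adj b₁ d₂) (hb₂d₁ : ¬G.Adj b₂ d₁)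
    (hx₁d₂ : ¬G.Adj x₁ d₂) (hx₂d₁ : ¬G.Adj x₂ d₁) : ¬G.Adj b₁ b₂ := by
  classical
  intro hb₁b₂
  obtain ⟨a₁, hab₁, ha₁⟩ := exists_adj_dist_eq_of_dist_eq_add_one hb₁
  refine Nonempty.elim ?_ hP6.false
  refine if hx₁x₂ : G.Adj x₁ x₂ then
      nonempty_pathGraph_six_embedding hab₁ hbd₁ hdx₁ hx₁x₂ hdx₂.symm
        ?_ ?_ ?_ ?_ ?_ ?_ ?_ ?_ ?_ ?_
    else
      nonempty_pathGraph_six_embedding hdx₁.symm hbd₁.symm hb₁b₂ hbd₂ hdx₂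
        ?_ ?_ ?_ ?_ ?_ ?_ ?_ ?_ ?_ ?_
  all_goals first
    | assumption
    | (rw [adj_comm]; assumption)
    | (intro h; have := h.diff_dist_adj (u := v); omega)

end SimpleGraph

lemma IsEffDomSet.not_adj_of_dominate {V : Type*} {G : SimpleGraph V} {D : Set V}
    (hD : IsEffDomSet G D) {d d' u : V} (hd : d ∈ D) (hd' : d' ∈ D) (hne : d ≠ d')
    (hdu : d = u ∨ G.Adj d u) : ¬G.Adj u d' :=
  fun hud' => hne ((hD u).unique ⟨hd, hdu⟩ ⟨hd', .inr hud'.symm⟩)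

theorem stmt10_general {V : Type*} (G : SimpleGraph V)
    (hP6free : IsEmpty (SimpleGraph.pathGraph 6 ↪g G))
    (hSfree : IsEmpty (S122 ↪g G))
    (D : Set V) (hD : IsEffDomSet G D) (v : V) :
    ∀ d₁ ∈ D, ∀ d₂ ∈ D, G.dist v d₁ = 3 → G.dist v d₂ = 3 →
      (∃ x, G.Adj d₁ x ∧ G.dist v x = 4) → (∃ x, G.Adj d₂ x ∧ G.dist v x = 4) →
      d₁ = d₂ := by
  rintro d₁ hd₁ d₂ hd₂ h₁ h₂ ⟨x₁, hdx₁, hx₁⟩ ⟨x₂, hdx₂, hx₂⟩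
  by_contra hne
  obtain ⟨b₁, hbd₁, hb₁⟩ := exists_adj_dist_eq_of_dist_eq_add_one h₁
  obtain ⟨b₂, hbd₂, hb₂⟩ := exists_adj_dist_eq_of_dist_eq_add_one h₂
  have hd₁d₂ := hD.not_adj_of_dominate hd₁ hd₂ hne (.inl rfl)
  have hb₁d₂ := hD.not_adj_of_dominate hd₁ hd₂ hne (.inr hbd₁.symm)
  have hb₂d₁ := hD.not_adj_of_dominate hd₂ hd₁ (Ne.symm hne) (.inr hbd₂.symm)
  have hx₁d₂ := hD.not_adj_of_dominate hd₁ hd₂ hne (.inr hdx₁)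
  have hx₂d₁ := hD.not_adj_of_dominate hd₂ hd₁ (Ne.symm hne) (.inr hdx₂)
  exact parents_not_adj_of_dist_eq_four hP6free hb₁ hb₂ h₁ h₂ hx₁ hx₂ hbd₁ hbd₂ hdx₁ hdx₂
    hd₁d₂ hb₁d₂ hb₂d₁ hx₁d₂ hx₂d₁
    (parents_adj_of_dist_eq_three hP6free hSfree hb₁ hb₂ h₁ h₂ hbd₁ hbd₂ hd₁d₂ hb₁d₂ hb₂d₁)

theorem stmt10 {V : Type*} [Fintype V] (G : SimpleGraph V) (hG : G.Connected)
    (hP6free : IsEmpty (SimpleGraph.pathGraph 6 ↪g G))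
    (hSfree : IsEmpty (S122 ↪g G))
    (D : Set V) (hD : IsEffDomSet G D) (v : V) (hv : v ∈ D) :
    ∀ d₁ ∈ D, ∀ d₂ ∈ D, G.dist v d₁ = 3 → G.dist v d₂ = 3 →
      (∃ x, G.Adj d₁ x ∧ G.dist v x = 4) → (∃ x, G.Adj d₂ x ∧ G.dist v x = 4) →
      d₁ = d₂ :=
  stmt10_general G hP6free hSfree D hD v
end

section
/- Let G be a connected {P₆, S₁,₂,₂}-free graph with efficient dominating set D, v ∈ D, and distance levels Nᵢ. Then D ∩ N₄ = ∅, i.e., no vertex at distance 4 from v belongs to D. -/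
open SimpleGraph

/-!
Suppose `w ∈ D` with `dist v w = 4`, and let `v x₁ x₂ x₃ w` be a shortest path; being a shortest
path, it is induced. The vertex `x₂` is not in `D` (it would share the neighbour `x₁` with `v`), so
it is dominated by a neighbour `d ∈ D`. Efficiency makes `d` nonadjacent to `v` and `w` (`D` is
independent) and to `x₁` and `x₃` (already dominated by `v` and `w`). Hence `v, x₁, x₂, x₃, w, d`
induce an `S₁,₂,₂`.
-/

instance : DecidableRel S122.Adj := fun i j =>
  decidable_of_iff (s(i, j) ∈ ({s(0, 1), s(1, 2), s(2, 3), s(3, 4), s(2, 5)} : Finset _) ∧ i ≠ j)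
    (by simp [S122])

namespace SimpleGraph

variable {V : Type*} {G : SimpleGraph V}

lemma Walk.dist_getVert_of_length_eq_dist {u w : V} (p : G.Walk u w)
    (hp : p.length = G.dist u w) {i : ℕ} (hi : i ≤ p.length) : G.dist u (p.getVert i) = i := by
  have hle : G.dist u (p.getVert i) ≤ i := by
    simpa [hi] using dist_le (p.take i)
  have hge : G.dist u w ≤ G.dist u (p.getVert i) + (p.length - i) :=
    calc G.dist u w ≤ G.dist u (p.getVert i) + G.dist (p.getVert i) w :=
          (p.drop i).reachable.dist_triangle_right u
      _ ≤ G.dist u (p.getVert i) + (p.length - i) := by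
          gcongr
          simpa using dist_le (p.drop i)
  omega

lemma not_adj_of_dist_add_two_le {u a b : V} (h : G.dist u a + 2 ≤ G.dist u b) :
    ¬G.Adj a b := fun hab => by
  rcases hab.diff_dist_adj (u := u) with h' | h' | h' <;> omega

lemma injective_of_adj_iff {W : Type*} {H : SimpleGraph W}
    (hH : ∀ i j, i ≠ j → ∃ k, ¬(H.Adj i k ↔ H.Adj j k)) {f : W → V}
    (hf : ∀ i j, G.Adj (f i) (f j) ↔ H.Adj i j) : f.Injective := by
  intro i j hij
  by_contra hne
  obtain ⟨k, hk⟩ := hH i j hne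
  exact hk (by rw [← hf, ← hf, hij])

end SimpleGraph

namespace IsEffDomSet

variable {V : Type*} {G : SimpleGraph V} {D : Set V}

lemma eq_of_mem_of_mem (hD : IsEffDomSet G D) {u a b : V} (ha : a ∈ D) (hau : a = u ∨ G.Adj a u)
    (hb : b ∈ D) (hbu : b = u ∨ G.Adj b u) : a = b :=
  (hD u).unique ⟨ha, hau⟩ ⟨hb, hbu⟩

lemma not_adj_s11 (hD : IsEffDomSet G D) {a b : V} (ha : a ∈ D) (hb : b ∈ D) : ¬G.Adj a b :=
  fun hab => hab.ne (hD.eq_of_mem_of_mem ha (.inr hab) hb (.inl rfl))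

lemma eq_of_adj_of_adj (hD : IsEffDomSet G D) {u a b : V} (ha : a ∈ D) (hb : b ∈ D)
    (hau : G.Adj a u) (hbu : G.Adj b u) : a = b :=
  hD.eq_of_mem_of_mem ha (.inr hau) hb (.inr hbu)

lemma exists_mem_adj_of_adj_of_adj (hD : IsEffDomSet G D) {v u x : V} (hv : v ∈ D)
    (hvu : G.Adj v u) (hux : G.Adj u x) (hxv : x ≠ v) : ∃ d ∈ D, G.Adj d x := by
  obtain ⟨d, ⟨hd, rfl | hdx⟩, -⟩ := hD x
  · exact absurd (hD.eq_of_adj_of_adj hd hv hux.symm hvu) hxv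
  · exact ⟨d, hd, hdx⟩

end IsEffDomSet

lemma S122.exists_adj_ne_adj : ∀ i j : Fin 6, i ≠ j → ∃ k, ¬(S122.Adj i k ↔ S122.Adj j k) := by
  decide

lemma S122.nonempty_embedding_of_adj {V : Type*} {G : SimpleGraph V} {a₀ a₁ a₂ a₃ a₄ a₅ : V}
    (h01 : G.Adj a₀ a₁) (h12 : G.Adj a₁ a₂) (h23 : G.Adj a₂ a₃) (h34 : G.Adj a₃ a₄)
    (h25 : G.Adj a₂ a₅) (h02 : ¬G.Adj a₀ a₂) (h03 : ¬G.Adj a₀ a₃) (h04 : ¬G.Adj a₀ a₄)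
    (h05 : ¬G.Adj a₀ a₅) (h13 : ¬G.Adj a₁ a₃) (h14 : ¬G.Adj a₁ a₄) (h15 : ¬G.Adj a₁ a₅)
    (h24 : ¬G.Adj a₂ a₄) (h35 : ¬G.Adj a₃ a₅) (h45 : ¬G.Adj a₄ a₅) :
    Nonempty (S122 ↪g G) := by
  let f : Fin 6 → V := ![a₀, a₁, a₂, a₃, a₄, a₅]
  have hf : ∀ i j, G.Adj (f i) (f j) ↔ S122.Adj i j := by
    intro i j
    fin_cases i <;> fin_cases j <;>
      first
        | exact iff_of_true (by assumption) (by decide)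
        | exact iff_of_true (G.adj_symm (by assumption)) (by decide)
        | exact iff_of_false (by assumption) (by decide)
        | exact iff_of_false (fun h => (by assumption : ¬G.Adj _ _) h.symm) (by decide)
        | exact iff_of_false (G.loopless.irrefl _) (by decide)
  -- no two vertices of `S₁,₂,₂` have the same neighbourhood, so `f` is injective
  exact ⟨⟨⟨f, injective_of_adj_iff S122.exists_adj_ne_adj hf⟩, hf _ _⟩⟩

theorem stmt11_general {V : Type*} (G : SimpleGraph V)
    (hSfree : IsEmpty (S122 ↪g G))
    (D : Set V) (hD : IsEffDomSet G D) (v : V) (hv : v ∈ D) :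
    D ∩ {w | G.dist v w = 4} = ∅ := by
  rw [← not_nonempty_iff] at hSfree
  refine Set.eq_empty_of_forall_notMem fun w ⟨hw, (hvw : G.dist v w = 4)⟩ => hSfree ?_
  obtain ⟨p, hp⟩ := exists_walk_of_dist_ne_zero (by omega : G.dist v w ≠ 0)
  have hdist (i : ℕ) (hi : i ≤ 4 := by omega) : G.dist v (p.getVert i) = i :=
    p.dist_getVert_of_length_eq_dist hp (by omega)
  have hadj (i : ℕ) (hi : i < 4 := by omega) : G.Adj (p.getVert i) (p.getVert (i + 1)) :=
    p.adj_getVert_succ (by omega)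
  have hfar (i j : ℕ) (hij : i + 2 ≤ j := by omega) (hj : j ≤ 4 := by omega) :
      ¬G.Adj (p.getVert i) (p.getVert j) :=
    not_adj_of_dist_add_two_le (by rw [hdist i, hdist j]; omega)
  rw [← p.getVert_zero] at hv
  rw [← p.getVert_length, hp, hvw] at hw
  obtain ⟨d, hd, hdx₂⟩ := hD.exists_mem_adj_of_adj_of_adj hv (hadj 0) (hadj 1)
    (fun h => by simpa [h] using hdist 2)
  have hdx₁ : ¬G.Adj (p.getVert 1) d := fun h =>
    absurd (hD.eq_of_adj_of_adj hd hv h.symm (hadj 0) ▸ hdx₂) (hfar 0 2)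
  have hdx₃ : ¬G.Adj (p.getVert 3) d := fun h =>
    absurd (hD.eq_of_adj_of_adj hd hw h.symm (hadj 3).symm ▸ hdx₂).symm (hfar 2 4)
  exact S122.nonempty_embedding_of_adj (hadj 0) (hadj 1) (hadj 2) (hadj 3) hdx₂.symm
    (hfar 0 2) (hfar 0 3) (hfar 0 4) (hD.not_adj_s11 hv hd) (hfar 1 3) (hfar 1 4) hdx₁ (hfar 2 4)
    hdx₃ (hD.not_adj_s11 hw hd)

theorem stmt11 {V : Type*} [Fintype V] (G : SimpleGraph V) (hG : G.Connected)
    (hP6free : IsEmpty (SimpleGraph.pathGraph 6 ↪g G))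
    (hSfree : IsEmpty (S122 ↪g G))
    (D : Set V) (hD : IsEffDomSet G D) (v : V) (hv : v ∈ D) :
    D ∩ {w | G.dist v w = 4} = ∅ :=
  stmt11_general G hSfree D hD v hv
end

section
/- Let G = (V,E) be a cograph (P₄-free graph). Then D ⊆ V is an efficient dominating set of G if and only if D consists of exactly one universal vertex of each connected component of G, where a universal vertex of a component is a vertex adjacent to all other vertices of that component. -/
/-!
If `d ∈ D` dominates `v` and `v ∼ u`, then `d` dominates `u` as well: otherwise `u` is
dominated by some `d' ∈ D`, and efficiency forces `d'` to miss `v` and `d`, so that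
`d - v - u - d'` is an induced `P₄`. Hence every vertex of an efficient dominating set of a
cograph dominates its whole component, and efficiency leaves room for only one such vertex per
component. The converse is immediate.
-/

open SimpleGraph

namespace SimpleGraph

variable {V : Type*} {G : SimpleGraph V}

lemma nonempty_pathGraph_four_embedding {a b c d : V} (hab : G.Adj a b) (hbc : G.Adj b c)
    (hcd : G.Adj c d) (hac : a ≠ c) (hbd : b ≠ d) (hnac : ¬G.Adj a c) (hnbd : ¬G.Adj b d)
    (hnad : ¬G.Adj a d) : Nonempty (pathGraph 4 ↪g G) := by
  have had : a ≠ d := by rintro rfl; exact hnbd hab.symm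
  let f : Fin 4 → V := ![a, b, c, d]
  have hf : Function.Injective f := by
    intro i j hij
    fin_cases i <;> fin_cases j <;>
      simp_all [f, hab.ne, hbc.ne, hcd.ne, hab.ne.symm, hbc.ne.symm, hcd.ne.symm, hac.symm,
        hbd.symm, had.symm]
  refine ⟨⟨⟨f, hf⟩, fun {i j} => ?_⟩⟩
  have hnca : ¬G.Adj c a := fun h => hnac h.symm
  have hndb : ¬G.Adj d b := fun h => hnbd h.symm
  have hnda : ¬G.Adj d a := fun h => hnad h.symm
  fin_cases i <;> fin_cases j <;>
    simp [f, pathGraph_adj, hab, hbc, hcd, hab.symm, hbc.symm, hcd.symm, hnac, hnbd, hnad,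
      hnca, hndb, hnda]

end SimpleGraph

namespace IsEffDomSet

variable {V : Type*} {G : SimpleGraph V} {D : Set V}

lemma eq_of_dominate (hD : IsEffDomSet G D) {a b z : V} (ha : a ∈ D) (hb : b ∈ D)
    (haz : a = z ∨ G.Adj a z) (hbz : b = z ∨ G.Adj b z) : a = b :=
  (hD z).unique ⟨ha, haz⟩ ⟨hb, hbz⟩

lemma dominate_of_adj (hD : IsEffDomSet G D) (hP₄ : IsEmpty (pathGraph 4 ↪g G)) {d v u : V}
    (hd : d ∈ D) (hdv : G.Adj d v) (hvu : G.Adj v u) : d = u ∨ G.Adj d u := by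
  by_contra! ⟨hdu, hndu⟩
  obtain ⟨d', ⟨hd', hd'u⟩, -⟩ := hD u
  have hd'v : ¬(d' = v ∨ G.Adj d' v) := fun h =>
    (hD.eq_of_dominate hd hd' (.inr hdv) h ▸ hd'u).elim hdu hndu
  have hd'd : ¬(d' = d ∨ G.Adj d' d) := fun h =>
    (hD.eq_of_dominate hd hd' (.inl rfl) h ▸ hd'u).elim hdu hndu
  have hud' : G.Adj u d' := (hd'u.resolve_left fun h => hd'v (.inr (h ▸ hvu.symm))).symm
  exact (nonempty_pathGraph_four_embedding hdv hvu hud' hdu (fun h => hd'v (.inl h.symm)) hndu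
    (fun h => hd'v (.inr h.symm)) (fun h => hd'd (.inr h.symm))).elim hP₄.elim

lemma dominate_of_reachable (hD : IsEffDomSet G D) (hP₄ : IsEmpty (pathGraph 4 ↪g G)) {d u : V}
    (hd : d ∈ D) (hdu : G.Reachable d u) : d = u ∨ G.Adj d u := by
  rw [reachable_iff_reflTransGen] at hdu
  induction hdu with
  | refl => exact .inl rfl
  | tail _ hvu ih =>
    rcases ih with rfl | hdv
    · exact .inr hvu
    · exact hD.dominate_of_adj hP₄ hd hdv hvu

end IsEffDomSet

lemma connectedComponentMk_eq_of_dominate {V : Type*} {G : SimpleGraph V} {d u : V}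
    (h : d = u ∨ G.Adj d u) : G.connectedComponentMk d = G.connectedComponentMk u :=
  ConnectedComponent.eq.mpr (h.elim (· ▸ Reachable.refl d) Adj.reachable)

theorem stmt14_general {V : Type*} (G : SimpleGraph V)
    (hcograph : IsEmpty (SimpleGraph.pathGraph 4 ↪g G))
    (D : Set V) :
    IsEffDomSet G D ↔
      ((∀ d ∈ D, ∀ w : V,
          G.connectedComponentMk w = G.connectedComponentMk d → w ≠ d → G.Adj d w) ∧
       (∀ u : V, ∃! d : V, d ∈ D ∧
          G.connectedComponentMk d = G.connectedComponentMk u)) := by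
  constructor
  · intro hD
    have huniv : ∀ d ∈ D, ∀ w, G.connectedComponentMk w = G.connectedComponentMk d →
        d = w ∨ G.Adj d w := fun d hd w hw =>
      hD.dominate_of_reachable hcograph hd (ConnectedComponent.eq.mp hw.symm)
    refine ⟨fun d hd w hw hwd => (huniv d hd w hw).resolve_left hwd.symm, fun u => ?_⟩
    obtain ⟨d, ⟨hd, hdu⟩, -⟩ := hD u
    refine ⟨d, ⟨hd, connectedComponentMk_eq_of_dominate hdu⟩, fun d' ⟨hd', hd'u⟩ => ?_⟩
    exact hD.eq_of_dominate hd' hd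
      (huniv d' hd' d ((connectedComponentMk_eq_of_dominate hdu).trans hd'u.symm)) (.inl rfl)
  · rintro ⟨huniv, hunique⟩ u
    obtain ⟨d, ⟨hd, hdu⟩, hd_unique⟩ := hunique u
    refine ⟨d, ⟨hd, ?_⟩, fun d' ⟨hd', hd'u⟩ =>
      hd_unique d' ⟨hd', connectedComponentMk_eq_of_dominate hd'u⟩⟩
    by_cases hud : u = d
    · exact .inl hud.symm
    · exact .inr (huniv d hd u hdu.symm hud)

theorem stmt14 {V : Type*} [Fintype V] (G : SimpleGraph V)
    (hcograph : IsEmpty (SimpleGraph.pathGraph 4 ↪g G))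
    (D : Set V) :
    IsEffDomSet G D ↔
      ((∀ d ∈ D, ∀ w : V,
          G.connectedComponentMk w = G.connectedComponentMk d → w ≠ d → G.Adj d w) ∧
       (∀ u : V, ∃! d : V, d ∈ D ∧
          G.connectedComponentMk d = G.connectedComponentMk u)) :=
  stmt14_general G hcograph D
end
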